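/- arXiv:math/9409226 — 3 statements merged into one kernel-verified Lean document; each statement's English description precedes it below -/
import Mathlib

section
/- Let P : V → ℝ² define a unit disk graph G (u ~ v iff u ≠ v and dist(P u, P v) ≤ 2), and let v be a vertex such that (P v).x is minimal among all vertices. Then every independent set contained in the neighborhood N(v) has size at most 3. -/
/-!
Translate so that `P v` is the origin. The neighbours of `v` then lie in the closed right half-disk
of radius 2, which is the union of three sectors of opening angle `π / 3`. Two points of the same
sector make an angle at most `π / 3` at the origin, so by the law of cosines they are at distance at
most 2; by pigeonhole, four neighbours of `v` cannot be pairwise non-adjacent.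
-/

open scoped RealInnerProductSpace

/-- Unit disk graph in the proximity model: vertices are mapped to points in the
plane and two distinct vertices are adjacent iff their points are at distance ≤ 2. -/
def unitDiskGraph {V : Type*} (P : V → EuclideanSpace ℝ (Fin 2)) : SimpleGraph V where
  Adj u v := u ≠ v ∧ dist (P u) (P v) ≤ 2
  symm := by
    constructor
    intro u v h
    exact ⟨h.1.symm, by rw [dist_comm]; exact h.2⟩
  loopless := by
    constructor
    intro v h
    exact h.1 rfl

theorem norm_sub_le_of_norm_mul_norm_le_two_mul_inner {E : Type*} [NormedAddCommGroup E]
    [InnerProductSpace ℝ E] {x y : E} {r : ℝ} (hx : ‖x‖ ≤ r) (hy : ‖y‖ ≤ r)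
    (hxy : ‖x‖ * ‖y‖ ≤ 2 * ⟪x, y⟫) : ‖x - y‖ ≤ r := by
  have hsq : ‖x - y‖ ^ 2 ≤ r ^ 2 := by
    rw [norm_sub_sq_real]
    nlinarith [mul_nonneg (sub_nonneg.2 hx) (sub_nonneg.2 hy), norm_nonneg x, norm_nonneg y]
  exact (pow_le_pow_iff_left₀ (norm_nonneg _) ((norm_nonneg x).trans hx) two_ne_zero).1 hsq

namespace EuclideanSpace

theorem norm_sq_fin_two (x : EuclideanSpace ℝ (Fin 2)) : ‖x‖ ^ 2 = x 0 ^ 2 + x 1 ^ 2 := by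
  simp [EuclideanSpace.norm_sq_eq, Fin.sum_univ_two]

theorem inner_fin_two (x y : EuclideanSpace ℝ (Fin 2)) : ⟪x, y⟫ = x 0 * y 0 + x 1 * y 1 := by
  simp [PiLp.inner_apply, Fin.sum_univ_two, mul_comm]

/-- With `(a, b) = x` and `(c, d) = y`, the identity
`4 (ac + bd)² - (a² + b²)(c² + d²) = (8/3) ac (ac + 3bd) + (1/3) (a² - 3b²)(c² - 3d²)`
has both terms on the right nonnegative under the hypotheses. -/
theorem norm_mul_norm_le_two_mul_inner_of_fin_two {x y : EuclideanSpace ℝ (Fin 2)}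
    (h₀ : 0 ≤ x 0 * y 0) (h₁ : 0 ≤ x 0 * y 0 + 3 * (x 1 * y 1))
    (h₂ : 0 ≤ (x 0 ^ 2 - 3 * x 1 ^ 2) * (y 0 ^ 2 - 3 * y 1 ^ 2)) :
    ‖x‖ * ‖y‖ ≤ 2 * ⟪x, y⟫ := by
  have hinner : 0 ≤ ⟪x, y⟫ := by rw [inner_fin_two]; linarith
  have hsq : (‖x‖ * ‖y‖) ^ 2 ≤ (2 * ⟪x, y⟫) ^ 2 := by
    rw [mul_pow, norm_sq_fin_two, norm_sq_fin_two, inner_fin_two]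
    nlinarith [mul_nonneg h₀ h₁]
  exact (pow_le_pow_iff_left₀ (by positivity) (by positivity) two_ne_zero).1 hsq

/-- For `x 0 ≥ 0`, the sectors `0`, `1`, `2` are those of polar angle in `[-π/6, π/6]`,
`(π/6, π/2]` and `[-π/2, -π/6)`. -/
noncomputable def rightHalfPlaneSector (x : EuclideanSpace ℝ (Fin 2)) : Fin 3 :=
  if 3 * x 1 ^ 2 ≤ x 0 ^ 2 then 0 else if 0 ≤ x 1 then 1 else 2

theorem norm_mul_norm_le_two_mul_inner_of_sector_eq {x y : EuclideanSpace ℝ (Fin 2)}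
    (hx : 0 ≤ x 0) (hy : 0 ≤ y 0) (h : rightHalfPlaneSector x = rightHalfPlaneSector y) :
    ‖x‖ * ‖y‖ ≤ 2 * ⟪x, y⟫ := by
  have h₀ : 0 ≤ x 0 * y 0 := mul_nonneg hx hy
  unfold rightHalfPlaneSector at h
  split_ifs at h <;> try exact absurd h (by decide)
  · rename_i hx₁ hy₁
    refine norm_mul_norm_le_two_mul_inner_of_fin_two h₀ ?_
      (mul_nonneg (by linarith) (by linarith))
    nlinarith [mul_le_mul hx₁ hy₁ (by positivity) (sq_nonneg _)]
  · rename_i hx₁ hx₂ hy₁ hy₂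
    exact norm_mul_norm_le_two_mul_inner_of_fin_two h₀
      (by nlinarith [mul_nonneg hx₂ hy₂]) (mul_nonneg_of_nonpos_of_nonpos (by linarith) (by linarith))
  · rename_i hx₁ hx₂ hy₁ hy₂
    exact norm_mul_norm_le_two_mul_inner_of_fin_two h₀
      (by nlinarith [mul_nonneg_of_nonpos_of_nonpos (le_of_not_ge hx₂) (le_of_not_ge hy₂)])
      (mul_nonneg_of_nonpos_of_nonpos (by linarith) (by linarith))

theorem exists_ne_norm_sub_le_of_three_lt_card {ι : Type*} (f : ι → EuclideanSpace ℝ (Fin 2))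
    {r : ℝ} {s : Finset ι} (hs : 3 < s.card) (hr : ∀ i ∈ s, ‖f i‖ ≤ r)
    (h₀ : ∀ i ∈ s, 0 ≤ f i 0) : ∃ i ∈ s, ∃ j ∈ s, i ≠ j ∧ ‖f i - f j‖ ≤ r := by
  obtain ⟨i, hi, j, hj, hij, hsector⟩ :=
    Finset.exists_ne_map_eq_of_card_lt_of_maps_to (t := Finset.univ) (by simpa using hs)
      (f := fun i => rightHalfPlaneSector (f i)) fun _ _ => Finset.mem_coe.2 (Finset.mem_univ _)
  exact ⟨i, hi, j, hj, hij, norm_sub_le_of_norm_mul_norm_le_two_mul_inner (hr i hi) (hr j hj)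
    (norm_mul_norm_le_two_mul_inner_of_sector_eq (h₀ i hi) (h₀ j hj) hsector)⟩

end EuclideanSpace

/-- If `v` is a vertex of a unit disk graph whose point has minimal
`x`-coordinate, then every independent set contained in the neighborhood of `v`
has size at most 3. -/
theorem unitDiskGraph_leftmost_indep_le_three {V : Type*}
    (P : V → EuclideanSpace ℝ (Fin 2)) (v : V)
    (hmin : ∀ u : V, P v 0 ≤ P u 0) (s : Finset V)
    (hnbr : ∀ x ∈ s, (unitDiskGraph P).Adj v x)
    (hind : (↑s : Set V).Pairwise fun a b => ¬ (unitDiskGraph P).Adj a b) :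
    s.card ≤ 3 := by
  by_contra! hcard
  have hnorm : ∀ u ∈ s, ‖P u - P v‖ ≤ 2 := fun u hu => by
    simpa [← dist_eq_norm, dist_comm] using (hnbr u hu).2
  have hright : ∀ u ∈ s, 0 ≤ (P u - P v) 0 := fun u hu => by
    simpa using hmin u
  obtain ⟨x, hx, y, hy, hxy, hclose⟩ :=
    EuclideanSpace.exists_ne_norm_sub_le_of_three_lt_card (fun u => P u - P v) hcard hnorm hright
  exact hind hx hy hxy ⟨hxy, by simpa [dist_eq_norm] using hclose⟩
end

section
/- Every finite triangle-free unit disk graph (given by a proximity model P : V → ℝ² with adjacency threshold 2) has a vertex of degree at most 3. -/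
open InnerProductGeometry Real Finset

theorem InnerProductGeometry.norm_sub_le_of_angle_le_pi_div_three {V : Type*}
    [NormedAddCommGroup V] [InnerProductSpace ℝ V] {x y : V} {r : ℝ}
    (hx : ‖x‖ ≤ r) (hy : ‖y‖ ≤ r) (hxy : angle x y ≤ π / 3) : ‖x - y‖ ≤ r := by
  have hcos : 1 / 2 ≤ cos (angle x y) := by
    rw [← cos_pi_div_three]
    exact cos_le_cos_of_nonneg_of_le_pi (angle_nonneg x y) (by linarith [pi_pos]) hxy
  have hsq : ‖x - y‖ ^ 2 ≤ r ^ 2 := by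
    rw [sq, norm_sub_sq_eq_norm_sq_add_norm_sq_sub_two_mul_norm_mul_norm_mul_cos_angle]
    nlinarith [mul_nonneg (norm_nonneg x) (norm_nonneg y),
      mul_nonneg (sub_nonneg.2 hx) (sub_nonneg.2 hy),
      mul_nonneg (norm_nonneg x) (sub_nonneg.2 hx), mul_nonneg (norm_nonneg y) (sub_nonneg.2 hy)]
  exact abs_le_of_sq_le_sq' hsq ((norm_nonneg x).trans hx) |>.2

theorem Complex.angle_eq_abs_arg_sub_arg {x y : ℂ} (hx : x ≠ 0) (hy : y ≠ 0)
    (hxy : |x.arg - y.arg| < π) : angle x y = |x.arg - y.arg| := by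
  have harg : (x / y).arg = x.arg - y.arg := by
    rw [← arg_coe_angle_toReal_eq_arg, arg_div_coe_angle hx hy, ← Real.Angle.coe_sub,
      Real.Angle.toReal_coe_eq_self_iff_mem_Ioc]
    exact ⟨(abs_lt.1 hxy).1, (abs_lt.1 hxy).2.le⟩
  rw [angle_eq_abs_arg hx hy, harg]

theorem Complex.norm_sub_le_of_abs_arg_sub_le {x y : ℂ} {r : ℝ} (hx : ‖x‖ ≤ r) (hy : ‖y‖ ≤ r)
    (hxy : |x.arg - y.arg| ≤ π / 3) : ‖x - y‖ ≤ r := by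
  rcases eq_or_ne x 0 with rfl | hx0
  · simpa using hy
  rcases eq_or_ne y 0 with rfl | hy0
  · simpa using hx
  refine norm_sub_le_of_angle_le_pi_div_three hx hy ?_
  rw [angle_eq_abs_arg_sub_arg hx0 hy0 (by linarith [pi_pos])]
  exact hxy

noncomputable def halfPlaneSector (θ : ℝ) : Fin 3 :=
  if θ ≤ -(π / 6) then 0 else if θ ≤ π / 6 then 1 else 2

theorem abs_sub_le_of_halfPlaneSector_eq {a b : ℝ} (ha : |a| ≤ π / 2) (hb : |b| ≤ π / 2)
    (hab : halfPlaneSector a = halfPlaneSector b) : |a - b| ≤ π / 3 := by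
  rw [abs_le] at ha hb ⊢
  unfold halfPlaneSector at hab
  split_ifs at hab <;> first | (constructor <;> linarith) | simp at hab

theorem Complex.exists_ne_norm_sub_le_of_re_nonneg {ι : Type*} {s : Finset ι} {z : ι → ℂ}
    {r : ℝ} (hs : 3 < #s) (hr : ∀ i ∈ s, ‖z i‖ ≤ r) (hre : ∀ i ∈ s, 0 ≤ (z i).re) :
    ∃ i ∈ s, ∃ j ∈ s, i ≠ j ∧ ‖z i - z j‖ ≤ r := by
  have hcard : #(univ : Finset (Fin 3)) < #s := by simpa using hs
  obtain ⟨i, hi, j, hj, hij, hsector⟩ :=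
    exists_ne_map_eq_of_card_lt_of_maps_to hcard (f := fun i ↦ halfPlaneSector (z i).arg)
      fun _ _ ↦ mem_coe.2 (mem_univ _)
  have harg : ∀ i ∈ s, |(z i).arg| ≤ π / 2 := fun i hi ↦ abs_arg_le_pi_div_two_iff.2 (hre i hi)
  exact ⟨i, hi, j, hj, hij, norm_sub_le_of_abs_arg_sub_le (hr i hi) (hr j hj)
    (abs_sub_le_of_halfPlaneSector_eq (harg i hi) (harg j hj) hsector)⟩

theorem unitDiskGraph.degree_le_three_of_leftmost {V : Type*} {P : V → EuclideanSpace ℝ (Fin 2)}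
    (htf : (unitDiskGraph P).CliqueFree 3) {v : V} [Fintype ((unitDiskGraph P).neighborSet v)]
    (hv : ∀ u, P v 0 ≤ P u 0) : (unitDiskGraph P).degree v ≤ 3 := by
  classical
  by_contra! hdeg
  let z u := Complex.orthonormalBasisOneI.repr.symm (P u - P v)
  have hz_dist : ∀ u w, ‖z u - z w‖ = dist (P u) (P w) := fun u w ↦ by
    simp only [z, ← map_sub, sub_sub_sub_cancel_right, LinearIsometryEquiv.norm_map, dist_eq_norm]
  have hz_norm : ∀ u, ‖z u‖ = dist (P u) (P v) := fun u ↦ by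
    simpa [z] using hz_dist u v
  obtain ⟨u, hu, w, hw, huw, huw_dist⟩ :=
    Complex.exists_ne_norm_sub_le_of_re_nonneg (s := (unitDiskGraph P).neighborFinset v) (z := z)
      (by rwa [SimpleGraph.card_neighborFinset_eq_degree])
      (fun u hu ↦ (hz_norm u).trans_le (((unitDiskGraph P).mem_neighborFinset v u).1 hu).symm.2)
      (fun u _ ↦ by simpa [z] using hv u)
  rw [SimpleGraph.mem_neighborFinset] at hu hw
  exact htf {v, u, w} (SimpleGraph.is3Clique_triple_iff.2 ⟨hu, hw, huw, hz_dist u w ▸ huw_dist⟩)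

open scoped Classical in
/-- Every finite triangle-free unit disk graph has a vertex of degree at most 3. -/
theorem triangleFree_unitDiskGraph_min_degree {V : Type*} [Fintype V] [Nonempty V]
    (P : V → EuclideanSpace ℝ (Fin 2))
    (htf : (unitDiskGraph P).CliqueFree 3) :
    ∃ v : V, (unitDiskGraph P).degree v ≤ 3 := by
  obtain ⟨v, hv⟩ := Finite.exists_min fun v ↦ P v 0
  exact ⟨v, unitDiskGraph.degree_le_three_of_leftmost htf hv⟩
end

section
/- Let G be a finite unit disk graph (proximity model in ℝ², threshold 2) and let δ(G) be the degeneracy of G (the largest δ such that some subgraph of G has minimum degree ≥ δ). Then the chromatic number of G satisfies χ(G) ≥ δ(G)/3 + 1, and hence the (δ(G)+1)-coloring uses at most 3·χ(G) colors. -/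
open Finset

theorem norm_sub_le_of_norm_mul_norm_le_two_inner {E : Type*} [NormedAddCommGroup E]
    [InnerProductSpace ℝ E] {a b : E} {r : ℝ} (ha : ‖a‖ ≤ r) (hb : ‖b‖ ≤ r)
    (hab : ‖a‖ * ‖b‖ ≤ 2 * inner ℝ a b) : ‖a - b‖ ≤ r := by
  have hsq : ‖a - b‖ ^ 2 ≤ r ^ 2 := by
    rw [norm_sub_sq_real]
    rcases le_total ‖a‖ ‖b‖ with h | h
    · nlinarith [norm_nonneg a]
    · nlinarith [norm_nonneg b]
  exact (abs_le_of_sq_le_sq' hsq ((norm_nonneg a).trans ha)).2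

/-- The angle between `(x₁, y₁)` and `(x₂, y₂)` is at most 60°: its cosine is nonnegative and
its tangent is at most `√3`. -/
def WithinSixtyDegrees (x₁ y₁ x₂ y₂ : ℝ) : Prop :=
  0 ≤ x₁ * x₂ + y₁ * y₂ ∧ (x₁ * y₂ - x₂ * y₁) ^ 2 ≤ 3 * (x₁ * x₂ + y₁ * y₂) ^ 2

theorem withinSixtyDegrees_of_flat {x₁ y₁ x₂ y₂ : ℝ} (hx₁ : 0 ≤ x₁) (hx₂ : 0 ≤ x₂)
    (h₁ : 3 * y₁ ^ 2 ≤ x₁ ^ 2) (h₂ : 3 * y₂ ^ 2 ≤ x₂ ^ 2) : WithinSixtyDegrees x₁ y₁ x₂ y₂ := by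
  have hxx : 0 ≤ x₁ * x₂ := mul_nonneg hx₁ hx₂
  have hyy : 9 * (y₁ * y₂) ^ 2 ≤ (x₁ * x₂) ^ 2 := by
    nlinarith [mul_le_mul h₁ h₂ (by positivity) (sq_nonneg x₁)]
  have hlo : -(x₁ * x₂) ≤ 3 * (y₁ * y₂) := by nlinarith
  refine ⟨by nlinarith, ?_⟩
  nlinarith [mul_le_mul_of_nonneg_left h₂ (sq_nonneg x₁),
    mul_le_mul_of_nonneg_left h₁ (sq_nonneg x₂), mul_le_mul_of_nonneg_left hlo hxx]

theorem withinSixtyDegrees_of_steep {x₁ y₁ x₂ y₂ : ℝ} (hx₁ : 0 ≤ x₁) (hx₂ : 0 ≤ x₂)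
    (hy₁ : 0 ≤ y₁) (hy₂ : 0 ≤ y₂) (h₁ : x₁ ^ 2 ≤ 3 * y₁ ^ 2) (h₂ : x₂ ^ 2 ≤ 3 * y₂ ^ 2) :
    WithinSixtyDegrees x₁ y₁ x₂ y₂ := by
  refine ⟨by positivity, ?_⟩
  nlinarith [mul_nonneg hy₁ hy₂, mul_nonneg hx₁ hx₂, mul_nonneg hx₁ hy₂, mul_nonneg hx₂ hy₁,
    mul_le_mul h₁ h₂ (sq_nonneg _) (by positivity)]

theorem withinSixtyDegrees_neg_neg {x₁ y₁ x₂ y₂ : ℝ} :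
    WithinSixtyDegrees x₁ (-y₁) x₂ (-y₂) ↔ WithinSixtyDegrees x₁ y₁ x₂ y₂ := by
  unfold WithinSixtyDegrees
  ring_nf

theorem EuclideanSpace.real_inner_fin_two (a b : EuclideanSpace ℝ (Fin 2)) :
    inner ℝ a b = a 0 * b 0 + a 1 * b 1 := by
  simp [PiLp.inner_apply, Fin.sum_univ_two, mul_comm]

theorem EuclideanSpace.real_norm_sq_fin_two (a : EuclideanSpace ℝ (Fin 2)) :
    ‖a‖ ^ 2 = a 0 ^ 2 + a 1 ^ 2 := by
  simp [EuclideanSpace.real_norm_sq_eq, Fin.sum_univ_two]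

theorem norm_mul_norm_le_two_inner_of_withinSixtyDegrees {a b : EuclideanSpace ℝ (Fin 2)}
    (h : WithinSixtyDegrees (a 0) (a 1) (b 0) (b 1)) : ‖a‖ * ‖b‖ ≤ 2 * inner ℝ a b := by
  obtain ⟨h₀, h⟩ := h
  rw [EuclideanSpace.real_inner_fin_two]
  refine (abs_le_of_sq_le_sq' ?_ (by positivity)).2
  rw [mul_pow, EuclideanSpace.real_norm_sq_fin_two, EuclideanSpace.real_norm_sq_fin_two]
  -- Lagrange's identity: `‖a‖²‖b‖² = ⟪a, b⟫² + (a₀b₁ - b₀a₁)²`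
  nlinarith

/-- The sector of the right half-plane containing `a`: `0` for angles in `[-30°, 30°]`, `1` for
`(30°, 90°]` and `2` for `[-90°, -30°)`. -/
noncomputable def rightSector (a : EuclideanSpace ℝ (Fin 2)) : Fin 3 :=
  if 3 * a 1 ^ 2 ≤ a 0 ^ 2 then 0 else if 0 ≤ a 1 then 1 else 2

theorem withinSixtyDegrees_of_rightSector_eq {a b : EuclideanSpace ℝ (Fin 2)}
    (ha : 0 ≤ a 0) (hb : 0 ≤ b 0) (h : rightSector a = rightSector b) :
    WithinSixtyDegrees (a 0) (a 1) (b 0) (b 1) := by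
  unfold rightSector at h
  split_ifs at h <;> try exact absurd h (by decide)
  · rename_i ha₁ hb₁
    exact withinSixtyDegrees_of_flat ha hb ha₁ hb₁
  · rename_i ha₁ ha₂ hb₁ hb₂
    exact withinSixtyDegrees_of_steep ha hb ha₂ hb₂ (not_le.1 ha₁).le (not_le.1 hb₁).le
  · rw [← withinSixtyDegrees_neg_neg]
    exact withinSixtyDegrees_of_steep ha hb (by linarith) (by linarith) (by linarith)
      (by linarith)

theorem SimpleGraph.Coloring.card_le_mul_of_isIndepSet_card_le {V α : Type*}
    [Fintype α] [DecidableEq α] {G : SimpleGraph V} (C : G.Coloring α) {k : ℕ} {v : V}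
    {N : Finset V} (hN : ∀ u ∈ N, G.Adj v u)
    (hind : ∀ t ⊆ N, G.IsIndepSet (t : Set V) → #t ≤ k) :
    #N ≤ k * (Fintype.card α - 1) := by
  have hclass : ∀ c, #{u ∈ N | C u = c} ≤ k := fun c =>
    hind _ (filter_subset _ _) fun u hu w hw _ hadj =>
      C.valid hadj ((mem_filter.1 hu).2.trans (mem_filter.1 hw).2.symm)
  have himage : N.image C ⊆ univ.erase (C v) := by
    simp only [subset_iff, mem_image, mem_erase, mem_univ, and_true]
    rintro _ ⟨u, hu, rfl⟩
    exact (C.valid (hN u hu)).symm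
  calc #N ≤ k * #(N.image C) := card_le_mul_card_image N k fun c _ => hclass c
    _ ≤ k * #(univ.erase (C v)) := Nat.mul_le_mul_left k (card_le_card himage)
    _ = k * (Fintype.card α - 1) := by rw [card_erase_of_mem (mem_univ _), card_univ]

theorem unitDiskGraph_card_le_three_of_isIndepSet {V : Type*}
    {P : V → EuclideanSpace ℝ (Fin 2)} {v : V} {t : Finset V}
    (hadj : ∀ u ∈ t, (unitDiskGraph P).Adj v u) (hright : ∀ u ∈ t, P v 0 ≤ P u 0)
    (ht : (unitDiskGraph P).IsIndepSet (t : Set V)) : #t ≤ 3 := by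
  by_contra! hlt
  obtain ⟨u, hu, w, hw, huw, hsector⟩ := exists_ne_map_eq_of_card_lt_of_maps_to
    (t := univ) (by simpa using hlt) fun u _ => mem_univ (rightSector (P u - P v))
  have hnorm : ∀ u ∈ t, ‖P u - P v‖ ≤ 2 := fun u hu => by
    simpa [dist_eq_norm, norm_sub_rev] using (hadj u hu).2
  have hright' : ∀ u ∈ t, 0 ≤ (P u - P v) 0 := fun u hu => by simpa using hright u hu
  have hdist : dist (P u) (P w) ≤ 2 := by
    rw [dist_eq_norm, ← sub_sub_sub_cancel_right (P u) (P w) (P v)]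
    exact norm_sub_le_of_norm_mul_norm_le_two_inner (hnorm u hu) (hnorm w hw)
      (norm_mul_norm_le_two_inner_of_withinSixtyDegrees
        (withinSixtyDegrees_of_rightSector_eq (hright' u hu) (hright' w hw) hsector))
  exact ht hu hw huw ⟨huw, hdist⟩

open scoped Classical in
theorem unitDiskGraph_chromaticNumber_ge_general {V : Type*}
    (P : V → EuclideanSpace ℝ (Fin 2)) (δ χ : ℕ)
    (h1 : ∃ s : Finset V, s.Nonempty ∧
      ∀ v ∈ s, δ ≤ (s.filter fun u => (unitDiskGraph P).Adj v u).card)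
    (hχ : (unitDiskGraph P).chromaticNumber = (χ : ℕ∞)) :
    (δ : ℝ) / 3 + 1 ≤ (χ : ℝ) ∧ δ + 1 ≤ 3 * χ := by
  obtain ⟨s, hs, hdeg⟩ := h1
  obtain ⟨v, hv, hleft⟩ := s.exists_min_image (fun u => P u 0) hs
  obtain ⟨C⟩ := SimpleGraph.chromaticNumber_le_iff_colorable.1 hχ.le
  have hχpos : 0 < χ := Fin.pos (C v)
  have hN : #{u ∈ s | (unitDiskGraph P).Adj v u} ≤ 3 * (χ - 1) := by
    simpa using C.card_le_mul_of_isIndepSet_card_le (fun u hu => (mem_filter.1 hu).2)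
      fun t hts ht => unitDiskGraph_card_le_three_of_isIndepSet
        (fun u hu => (mem_filter.1 (hts hu)).2) (fun u hu => hleft u (mem_filter.1 (hts hu)).1) ht
  have hδ : δ + 3 ≤ 3 * χ := by have := hdeg v hv; omega
  refine ⟨?_, by omega⟩
  have : (δ : ℝ) + 3 ≤ 3 * χ := by exact_mod_cast hδ
  linarith

open scoped Classical in
/-- For a finite unit disk graph with degeneracy `δ` (the largest `δ` such that
some nonempty subgraph has minimum degree `≥ δ`) and chromatic number `χ`, we
have `χ ≥ δ/3 + 1`; hence the `(δ+1)`-coloring uses at most `3χ` colors. -/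
theorem unitDiskGraph_chromaticNumber_ge {V : Type*} [Fintype V]
    (P : V → EuclideanSpace ℝ (Fin 2)) (δ χ : ℕ)
    (h1 : ∃ s : Finset V, s.Nonempty ∧
      ∀ v ∈ s, δ ≤ (s.filter fun u => (unitDiskGraph P).Adj v u).card)
    (h2 : ∀ δ' : ℕ, (∃ s : Finset V, s.Nonempty ∧
      ∀ v ∈ s, δ' ≤ (s.filter fun u => (unitDiskGraph P).Adj v u).card) → δ' ≤ δ)
    (hχ : (unitDiskGraph P).chromaticNumber = (χ : ℕ∞)) :
    (δ : ℝ) / 3 + 1 ≤ (χ : ℝ) ∧ δ + 1 ≤ 3 * χ :=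
  unitDiskGraph_chromaticNumber_ge_general P δ χ h1 hχ
end
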